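/- Let X and Y be finite metric spaces, R an optimal correspondence on them, and equip R with d_{1/2}((x,y),(x',y')) = (d_X(x,x') + d_Y(y,y'))/2. Then (R, d_{1/2}) is a midpoint between X and Y in the Gromov–Hausdorff space: d_GH(X,R) = d_GH(R,Y) = (1/2)·d_GH(X,Y). -/

import Mathlib

open GromovHausdorff Metric Filter Topology

def IsCorrespondence {X Y : Type*} (R : Set (X × Y)) : Prop :=
  (∀ x : X, ∃ y : Y, (x, y) ∈ R) ∧ (∀ y : Y, ∃ x : X, (x, y) ∈ R)

noncomputable def corrDis {X Y : Type*} [MetricSpace X] [MetricSpace Y]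
    (R : Set (X × Y)) : ℝ :=
  sSup {r : ℝ | ∃ p ∈ R, ∃ q ∈ R, r = |dist p.1 q.1 - dist p.2 q.2|}

/-!
Let `K = dis R`, so that `d_GH(X, Y) = K / 2`. In `d_{1/2}` the distance between two pairs differs
from the distance of their `X`-components (and of their `Y`-components) by half the discrepancy
`|d_X - d_Y|`, so both projections of `R` are surjections of distortion at most `K / 2`, and
`d_GH(X, R), d_GH(R, Y) ≤ K / 4`. The triangle inequality `K / 2 ≤ d_GH(X, R) + d_GH(R, Y)` then
forces equality in both bounds.
-/

namespace GromovHausdorff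

theorem ghDist_comm (X Y : Type*) [MetricSpace X] [CompactSpace X] [Nonempty X]
    [MetricSpace Y] [CompactSpace Y] [Nonempty Y] : ghDist X Y = ghDist Y X :=
  dist_comm _ _

theorem ghDist_le_ghDist_add_ghDist (X Y Z : Type*) [MetricSpace X] [CompactSpace X] [Nonempty X]
    [MetricSpace Y] [CompactSpace Y] [Nonempty Y] [MetricSpace Z] [CompactSpace Z] [Nonempty Z] :
    ghDist X Z ≤ ghDist X Y + ghDist Y Z :=
  dist_triangle _ _ _

section Surjection

variable {Z W : Type*} [MetricSpace Z] [CompactSpace Z] [Nonempty Z]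
  [MetricSpace W] [CompactSpace W] [Nonempty W]

theorem ghDist_le_of_surjective {f : Z → W} (hf : Function.Surjective f) {ε : ℝ}
    (H : ∀ p q : Z, |dist p q - dist (f p) (f q)| ≤ ε) :
    ghDist Z W ≤ ε / 2 := by
  have h := ghDist_le_of_approx_subsets (s := Set.univ) (fun p => f p.1) (ε₁ := 0) (ε₃ := 0)
    (fun z => ⟨z, trivial, by simp⟩)
    (fun w => by obtain ⟨z, rfl⟩ := hf w; exact ⟨⟨z, trivial⟩, by simp⟩)
    (fun p q => H p q)
  linarith

end Surjection

section Average

variable {X Y Z : Type*} [MetricSpace X] [MetricSpace Y] [MetricSpace Z]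
  [CompactSpace Z] [Nonempty Z] {f : Z → X} {g : Z → Y} {K : ℝ}

theorem ghDist_le_of_dist_eq_average_left [CompactSpace X] [Nonempty X]
    (hdist : ∀ p q, dist p q = (dist (f p) (f q) + dist (g p) (g q)) / 2)
    (hK : ∀ p q, |dist (f p) (f q) - dist (g p) (g q)| ≤ K) (hf : Function.Surjective f) :
    ghDist Z X ≤ K / 4 := by
  have H : ∀ p q, |dist p q - dist (f p) (f q)| ≤ K / 2 := fun p q => by
    rw [hdist, show (dist (f p) (f q) + dist (g p) (g q)) / 2 - dist (f p) (f q)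
      = -(dist (f p) (f q) - dist (g p) (g q)) / 2 by ring, abs_div, abs_neg, abs_two]
    linarith [hK p q]
  linarith [ghDist_le_of_surjective hf H]

theorem ghDist_le_of_dist_eq_average_right [CompactSpace Y] [Nonempty Y]
    (hdist : ∀ p q, dist p q = (dist (f p) (f q) + dist (g p) (g q)) / 2)
    (hK : ∀ p q, |dist (f p) (f q) - dist (g p) (g q)| ≤ K) (hg : Function.Surjective g) :
    ghDist Z Y ≤ K / 4 :=
  ghDist_le_of_dist_eq_average_left (f := g) (g := f)
    (fun p q => by rw [hdist, add_comm]) (fun p q => by rw [abs_sub_comm]; exact hK p q) hg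

end Average

end GromovHausdorff

section Correspondence

variable {X Y : Type*} {R : Set (X × Y)}

theorem IsCorrespondence.surjective_fst (hR : IsCorrespondence R) :
    Function.Surjective fun p : R => (p : X × Y).1 := fun x =>
  let ⟨y, hy⟩ := hR.1 x
  ⟨⟨(x, y), hy⟩, rfl⟩

theorem IsCorrespondence.surjective_snd (hR : IsCorrespondence R) :
    Function.Surjective fun p : R => (p : X × Y).2 := fun y =>
  let ⟨x, hx⟩ := hR.2 y
  ⟨⟨(x, y), hx⟩, rfl⟩

theorem abs_dist_sub_dist_le_corrDis [MetricSpace X] [MetricSpace Y] [Finite X] [Finite Y]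
    {p q : X × Y} (hp : p ∈ R) (hq : q ∈ R) : |dist p.1 q.1 - dist p.2 q.2| ≤ corrDis R := by
  refine le_csSup ((Set.finite_range fun pq : (X × Y) × (X × Y) =>
    |dist pq.1.1 pq.2.1 - dist pq.1.2 pq.2.2|).bddAbove.mono ?_) ⟨p, hp, q, hq, rfl⟩
  rintro r ⟨p, -, q, -, rfl⟩
  exact ⟨(p, q), rfl⟩

end Correspondence

theorem stmt7 {X Y : Type*} [MetricSpace X] [MetricSpace Y]
    [Fintype X] [Fintype Y] [Nonempty X] [Nonempty Y]
    (R : Set (X × Y)) (hR : IsCorrespondence R) [Nonempty ↥R]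
    (hopt : ghDist X Y = (1 / 2) * corrDis R)
    (dR : MetricSpace ↥R)
    (hdist : ∀ p q : ↥R, @dist _ dR.toDist p q =
      (dist (p : X × Y).1 (q : X × Y).1 + dist (p : X × Y).2 (q : X × Y).2) / 2) :
    (letI := dR; ghDist X ↥R = ghDist X Y / 2) ∧
    (letI := dR; ghDist ↥R Y = ghDist X Y / 2) := by
  let _ := dR
  have hK (p q : R) := abs_dist_sub_dist_le_corrDis p.2 q.2
  have hX := ghDist_le_of_dist_eq_average_left hdist hK hR.surjective_fst
  have hY := ghDist_le_of_dist_eq_average_right hdist hK hR.surjective_snd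
  have htri := ghDist_le_ghDist_add_ghDist X R Y
  rw [ghDist_comm] at hX
  constructor <;> linarith
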